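/- arXiv:2312.05115 — 6 statements merged into one kernel-verified Lean document; each statement's English description precedes it below -/
import Mathlib

section
/- Let f be a monic polynomial of degree d ≥ 2 over ℂ, let Ω = {z ∈ ℂ : dist(z, K_f) ≤ 1} where K_f is the filled Julia set, suppose f has Lipschitz constant A > 1 on Ω and the escape-rate (Green's) function G_f is bounded by M > 0 on Ω. Then for all z ∈ Ω, G_f(z) ≤ d·M·dist(z, K_f)^α, where α = log d / log A. -/
/-!
Near the filled Julia set `f` expands distances to `K` by at most the factor `A`, while `G` grows
by exactly the factor `d` along orbits. A point at distance `t` from `K` therefore stays in `Ω` for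
the `n` steps with `A ^ n * t ≤ 1`, giving `d ^ n * G z ≤ M`. For the largest such `n` we have
`A ^ (n + 1) * t > 1`, i.e. `d ^ (n + 1) * t ^ α > 1` because `A ^ α = d`, and the bound follows.
-/

open Metric Function

theorem infDist_apply_le_mul_of_mapsTo {X : Type*} [PseudoMetricSpace X] {f : X → X} {s : Set X}
    (hs : Set.MapsTo f s s) {A : ℝ} (hA : 0 ≤ A) {x : X}
    (hLip : ∀ y ∈ s, dist (f x) (f y) ≤ A * dist x y) :
    infDist (f x) s ≤ A * infDist x s := by
  rcases s.eq_empty_or_nonempty with rfl | hne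
  · simp
  have : Nonempty s := hne.to_subtype
  rw [infDist_eq_iInf (x := x), Real.mul_iInf_of_nonneg hA]
  exact le_ciInf fun y => (infDist_le_dist_of_mem (hs y.2)).trans (hLip y y.2)

theorem apply_iterate_le_pow_mul_of_le {X : Type*} {f : X → X} {D : X → ℝ} {A r : ℝ}
    (hA : 1 ≤ A) (hstep : ∀ x, D x ≤ r → D (f x) ≤ A * D x) {x : X} (hx : 0 ≤ D x) :
    ∀ n : ℕ, A ^ n * D x ≤ r → D (f^[n] x) ≤ A ^ n * D x
  | 0, _ => by simp
  | n + 1, hn => by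
    have hle : A ^ n * D x ≤ A ^ (n + 1) * D x :=
      mul_le_mul_of_nonneg_right (pow_le_pow_right₀ hA n.le_succ) hx
    have ih := apply_iterate_le_pow_mul_of_le hA hstep hx n (hle.trans hn)
    calc D (f^[n + 1] x) = D (f (f^[n] x)) := by rw [iterate_succ_apply']
      _ ≤ A * D (f^[n] x) := hstep _ (ih.trans (hle.trans hn))
      _ ≤ A * (A ^ n * D x) := mul_le_mul_of_nonneg_left ih (by linarith)
      _ = A ^ (n + 1) * D x := by ring

theorem apply_iterate_eq_pow_mul {X : Type*} {f : X → X} {G : X → ℝ} {c : ℝ}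
    (hG : ∀ x, G (f x) = c * G x) (n : ℕ) (x : X) : G (f^[n] x) = c ^ n * G x := by
  have hsemi : Semiconj G f (c * ·) := hG
  rw [hsemi.iterate_right n x, mul_left_iterate]

theorem le_mul_mul_rpow_logb_of_forall_pow_mul_le {A d g t M : ℝ} (hA : 1 < A) (hd : 1 < d)
    (hg : 0 ≤ g) (ht₀ : 0 ≤ t) (ht₁ : t ≤ 1)
    (h : ∀ n : ℕ, A ^ n * t ≤ 1 → d ^ n * g ≤ M) :
    g ≤ d * M * t ^ Real.logb A d := by
  have hα : 0 < Real.logb A d := Real.logb_pos hA hd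
  rcases ht₀.eq_or_lt with rfl | ht
  · suffices g ≤ 0 by simpa [Real.zero_rpow hα.ne'] using this
    by_contra! hpos
    obtain ⟨n, hn⟩ := pow_unbounded_of_one_lt (M / g) hd
    have := h n (by simp)
    rw [div_lt_iff₀ hpos] at hn
    linarith
  obtain ⟨n, hn, hn₁⟩ := exists_nat_pow_near (one_le_one_div ht ht₁) hA
  have hgn : d ^ n * g ≤ M := h n ((le_div_iff₀ ht).1 hn)
  have hM : 0 ≤ M := (mul_nonneg (by positivity) hg).trans hgn
  have hd₀ : 0 < d := by linarith
  have hgrowth : 1 ≤ d ^ (n + 1) * t ^ Real.logb A d := by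
    have hAt : 1 ≤ A ^ (n + 1) * t := ((div_lt_iff₀ ht).1 hn₁).le
    calc 1 ≤ (A ^ (n + 1) * t) ^ Real.logb A d := Real.one_le_rpow hAt hα.le
      _ = d ^ (n + 1) * t ^ Real.logb A d := by
        rw [Real.mul_rpow (by positivity) ht.le, ← Real.rpow_pow_comm (by linarith),
          Real.rpow_logb (by linarith) hA.ne' hd₀]
  calc g ≤ M / d ^ n := by rw [le_div_iff₀ (by positivity)]; linarith
    _ ≤ M / d ^ n * (d ^ (n + 1) * t ^ Real.logb A d) :=
      le_mul_of_one_le_right (by positivity) hgrowth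
    _ = d * M * t ^ Real.logb A d := by field_simp; ring

theorem stmt2_general (d : ℕ) (hd : 2 ≤ d) (f : ℂ → ℂ) (G : ℂ → ℝ) (K : Set ℂ)
    (A M α : ℝ) (hA : 1 < A) (hα : α = Real.log d / Real.log A)
    (hGf : ∀ z, G (f z) = d * G z)
    (hGnonneg : ∀ z, 0 ≤ G z)
    (hinv : ∀ z ∈ K, f z ∈ K)
    (hLip : ∀ z w : ℂ, Metric.infDist z K ≤ 1 → Metric.infDist w K ≤ 1 →
      ‖f z - f w‖ ≤ A * ‖z - w‖)
    (hGM : ∀ z : ℂ, Metric.infDist z K ≤ 1 → G z ≤ M) :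
    ∀ z : ℂ, Metric.infDist z K ≤ 1 → G z ≤ d * M * (Metric.infDist z K) ^ α := by
  intro z hz
  have hstep : ∀ w, infDist w K ≤ 1 → infDist (f w) K ≤ A * infDist w K := fun w hw =>
    infDist_apply_le_mul_of_mapsTo hinv (by linarith) fun y hy => by
      simpa only [dist_eq_norm] using hLip w y hw (by simp [infDist_zero_of_mem hy])
  subst hα
  refine le_mul_mul_rpow_logb_of_forall_pow_mul_le hA (by exact_mod_cast hd) (hGnonneg z)
    infDist_nonneg hz fun n hn => ?_
  rw [← apply_iterate_eq_pow_mul hGf]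
  exact hGM _ ((apply_iterate_le_pow_mul_of_le hA.le hstep infDist_nonneg n hn).trans hn)

/-- Hölder-type bound `G_f(z) ≤ d·M·dist(z, K_f)^α` on the
neighborhood `Ω = {z : dist(z, K_f) ≤ 1}` of the filled Julia set. -/
theorem stmt2 (d : ℕ) (hd : 2 ≤ d) (f : ℂ → ℂ) (G : ℂ → ℝ) (K : Set ℂ)
    (hK : K = {z | ∃ C, ∀ n, ‖f^[n] z‖ ≤ C})
    (A M α : ℝ) (hA : 1 < A) (hM : 0 < M) (hα : α = Real.log d / Real.log A)
    (hGf : ∀ z, G (f z) = d * G z)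
    (hG0 : ∀ z, G z = 0 ↔ z ∈ K)
    (hGnonneg : ∀ z, 0 ≤ G z)
    (hinv : ∀ z ∈ K, f z ∈ K)
    (hLip : ∀ z w : ℂ, Metric.infDist z K ≤ 1 → Metric.infDist w K ≤ 1 →
      ‖f z - f w‖ ≤ A * ‖z - w‖)
    (hGM : ∀ z : ℂ, Metric.infDist z K ≤ 1 → G z ≤ M) :
    ∀ z : ℂ, Metric.infDist z K ≤ 1 → G z ≤ d * M * (Metric.infDist z K) ^ α :=
  stmt2_general d hd f G K A M α hA hα hGf hGnonneg hinv hLip hGM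
end

section
/- Let |·| be a non-archimedean absolute value on a field, and let f(z) = z^d + a_{d-1}z^{d-1} + ... + a_0 with d ≥ 2 satisfy |a_i| ≤ 1 for all i ≥ 1 and |a_0| > 1. Then every point z in the filled Julia set of f satisfies |z| = |a_0|^{1/d}. Equivalently, if |z| ≠ |a_0|^{1/d} then |f^n(z)| → ∞. -/
/-!
Outside the sphere `|z| = r := |a₀|^{1/d}` a single term of `f z` dominates all the others:
the constant term `a₀` when `|z| < r`, and the leading term `z^d` when `|z| > r`. Hence `f`
maps every point off the sphere to `|f z| > r`, and on `|w| > r` it acts by `|f w| = |w|^d`,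
so `|f^[n+1] z| = |f z|^{d^n} → ∞`.
-/

open Filter

namespace IsNonarchimedean

variable {R : Type*} [CommRing R] [IsDomain R] {v : AbsoluteValue R ℝ}

theorem abv_pow_add_sum_eq_pow (hv : IsNonarchimedean v) {d : ℕ} (hd : d ≠ 0) (a : ℕ → R)
    {z : R} (h : ∀ i < d, v (a i) * v z ^ i < v z ^ d) :
    v (z ^ d + ∑ i ∈ Finset.range d, a i * z ^ i) = v z ^ d := by
  obtain ⟨i, hi, hsum⟩ := hv.finset_image_add_of_nonempty (fun i => a i * z ^ i)
    (Finset.nonempty_range_iff.mpr hd)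
  have hlt : v (∑ i ∈ Finset.range d, a i * z ^ i) < v (z ^ d) := by
    rw [map_pow]
    refine hsum.trans_lt ?_
    simpa only [map_mul, map_pow] using h i (Finset.mem_range.mp hi)
  rw [hv.add_eq_left_of_lt hlt, map_pow]

theorem abv_pow_add_sum_eq_abv_coeff_zero (hv : IsNonarchimedean v) {d : ℕ} (hd : d ≠ 0)
    (a : ℕ → R) {z : R} (hlead : v z ^ d < v (a 0))
    (h : ∀ i, 1 ≤ i → i < d → v (a i) * v z ^ i < v (a 0)) :
    v (z ^ d + ∑ i ∈ Finset.range d, a i * z ^ i) = v (a 0) := by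
  have hsum : v (∑ i ∈ Finset.range d, a i * z ^ i) = v (a 0) := by
    rw [hv.apply_sum_eq_of_lt (fun x => (map_neg_eq_map v x).symm)
      (Finset.mem_range.mpr (Nat.pos_of_ne_zero hd)), pow_zero, mul_one]
    intro i hi hi0
    simpa only [map_mul, map_pow, pow_zero, mul_one] using
      h i (Nat.one_le_iff_ne_zero.mpr hi0) (Finset.mem_range.mp hi)
  rw [hv.add_eq_right_of_lt (by rwa [map_pow, hsum]), hsum]

end IsNonarchimedean

section Escape

variable {L : Type*} [Field L] {v : AbsoluteValue L ℝ} (hv : IsNonarchimedean v) {d : ℕ}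
  {a : ℕ → L} {f : L → L} (hf : ∀ z, f z = z ^ d + ∑ i ∈ Finset.range d, a i * z ^ i)
  (ha : ∀ i, 1 ≤ i → i < d → v (a i) ≤ 1) {r : ℝ} (hr : r ^ d = v (a 0)) (hr1 : 1 < r)
include hv hf ha hr hr1

theorem abv_map_eq_abv_coeff_zero_of_lt (hd : d ≠ 0) {z : L} (hz : v z < r) :
    v (f z) = v (a 0) := by
  have hlead : v z ^ d < v (a 0) := hr ▸ pow_lt_pow_left₀ hz (v.nonneg z) hd
  have hpow : ∀ i < d, v z ^ i < v (a 0) := by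
    intro i hi
    rcases le_or_gt (v z) 1 with hz1 | hz1
    · calc v z ^ i ≤ 1 := pow_le_one₀ (v.nonneg z) hz1
        _ < r ^ d := one_lt_pow₀ hr1 hd
        _ = v (a 0) := hr
    · exact (pow_lt_pow_right₀ hz1 hi).trans hlead
  rw [hf, hv.abv_pow_add_sum_eq_abv_coeff_zero hd a hlead]
  intro i hi1 hid
  exact (mul_le_of_le_one_left (by positivity) (ha i hi1 hid)).trans_lt (hpow i hid)

theorem abv_map_eq_pow_of_lt (hd : d ≠ 0) {z : L} (hz : r < v z) : v (f z) = v z ^ d := by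
  have hz1 : 1 < v z := hr1.trans hz
  rw [hf, hv.abv_pow_add_sum_eq_pow hd a]
  intro i hi
  rcases Nat.eq_zero_or_pos i with rfl | hi0
  · rw [pow_zero, mul_one, ← hr]
    exact pow_lt_pow_left₀ hz (zero_lt_one.trans hr1).le hd
  · exact (mul_le_of_le_one_left (by positivity) (ha i hi0 hi)).trans_lt
      (pow_lt_pow_right₀ hz1 hi)

theorem abv_iterate_eq_pow_of_lt (hd : d ≠ 0) {z : L} (hz : r < v z) (n : ℕ) :
    v (f^[n] z) = v z ^ d ^ n := by
  induction n with
  | zero => simp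
  | succ n ih =>
    have hzn : r < v (f^[n] z) :=
      ih ▸ hz.trans_le (le_self_pow₀ (hr1.trans hz).le (pow_ne_zero n hd))
    rw [Function.iterate_succ_apply', abv_map_eq_pow_of_lt hv hf ha hr hr1 hd hzn, ih,
      ← pow_mul, pow_succ]

theorem lt_abv_map_of_ne (hd : 2 ≤ d) {z : L} (hz : v z ≠ r) : r < v (f z) := by
  rcases hz.lt_or_gt with hz | hz
  · rw [abv_map_eq_abv_coeff_zero_of_lt hv hf ha hr hr1 (by omega) hz, ← hr]
    exact lt_self_pow₀ hr1 (by omega)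
  · rw [abv_map_eq_pow_of_lt hv hf ha hr hr1 (by omega) hz]
    exact hz.trans_le (le_self_pow₀ (hr1.trans hz).le (by omega))

theorem tendsto_abv_iterate_of_ne (hd : 2 ≤ d) {z : L} (hz : v z ≠ r) :
    Tendsto (fun n => v (f^[n] z)) atTop atTop := by
  have hfz := lt_abv_map_of_ne hv hf ha hr hr1 hd hz
  rw [← tendsto_add_atTop_iff_nat 1]
  simp_rw [Function.iterate_succ_apply,
    abv_iterate_eq_pow_of_lt hv hf ha hr hr1 (by omega : d ≠ 0) hfz]
  exact (tendsto_pow_atTop_atTop_of_one_lt (hr1.trans hfz)).comp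
    (tendsto_pow_atTop_atTop_of_one_lt hd)

end Escape

/-- if `|a_i| ≤ 1` for `i ≥ 1` and `|a_0| > 1` (non-archimedean),
then every point of the filled Julia set has `|z| = |a_0|^{1/d}`; equivalently,
`|z| ≠ |a_0|^{1/d}` implies the orbit escapes to infinity. -/
theorem stmt4 {L : Type*} [Field L] (v : AbsoluteValue L ℝ)
    (hna : ∀ x y : L, v (x + y) ≤ max (v x) (v y))
    (d : ℕ) (hd : 2 ≤ d) (a : ℕ → L) (f : L → L)
    (hf : ∀ z, f z = z ^ d + ∑ i ∈ Finset.range d, a i * z ^ i)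
    (ha : ∀ i, 1 ≤ i → i < d → v (a i) ≤ 1) (ha0 : 1 < v (a 0)) :
    (∀ z : L, (∃ C, ∀ n, v (f^[n] z) ≤ C) → v z = v (a 0) ^ ((1 : ℝ) / d)) ∧
    (∀ z : L, v z ≠ v (a 0) ^ ((1 : ℝ) / d) →
      Tendsto (fun n => v (f^[n] z)) atTop atTop) := by
  have hr : (v (a 0) ^ ((1 : ℝ) / d)) ^ d = v (a 0) := by
    rw [one_div]
    exact Real.rpow_inv_natCast_pow (v.nonneg _) (by omega)
  have hr1 : 1 < v (a 0) ^ ((1 : ℝ) / d) := Real.one_lt_rpow ha0 (by positivity)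
  have escape := fun z (hz : v z ≠ _) => tendsto_abv_iterate_of_ne hna hf ha hr hr1 hd hz
  refine ⟨fun z ⟨C, hC⟩ => ?_, escape⟩
  by_contra hz
  obtain ⟨n, hn⟩ := ((escape z hz).eventually_gt_atTop C).exists
  exact (hC n).not_gt hn
end

section
/- For every ε > 0 there exists X₀ such that for all X ≥ X₀, the sum over integers 1 ≤ n ≤ X of 1/rad(n) is at most X^ε, where rad(n) is the product of the distinct primes dividing n. -/
/-!
Rankin's trick: for `0 < δ` and `n ≤ X` we have `1 / rad n ≤ X ^ δ · n ^ (-δ) / rad n`, and the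
multiplicative weight `n ^ (-δ) / rad n` has bounded partial sums. Indeed its Euler factor at `p`
is `1 + p ^ (-(1 + δ)) / (1 - p ^ (-δ)) ≤ exp (p ^ (-(1 + δ)) / (1 - 2 ^ (-δ)))`, and
`∑ p ^ (-(1 + δ))` converges. Taking `δ = ε / 2`, the bound `C` on the partial sums is at most
`X ^ (ε / 2)` once `X` is large.
-/

open Finset Real

/-- The radical of a positive integer: the product of its distinct prime divisors. -/
def rad (n : ℕ) : ℕ := ∏ p ∈ n.primeFactors, p

lemma rad_pos (n : ℕ) : 0 < rad n :=
  prod_pos fun _ hp => (Nat.prime_of_mem_primeFactors hp).pos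

lemma rad_one : rad 1 = 1 := by simp [rad]

lemma rad_mul_of_coprime {m n : ℕ} (h : m.Coprime n) : rad (m * n) = rad m * rad n := by
  rw [rad, h.primeFactors_mul, prod_union h.disjoint_primeFactors, rad, rad]

lemma rad_prime_pow {p k : ℕ} (hp : p.Prime) (hk : k ≠ 0) : rad (p ^ k) = p := by
  rw [rad, Nat.primeFactors_prime_pow hk hp, prod_singleton]

theorem sum_Icc_le_exp_tsum_of_tsum_prime_pow_le {f g : ℕ → ℝ} (hf : ∀ n, 0 ≤ f n)
    (hf₁ : f 1 = 1) (hmul : ∀ {m n : ℕ}, m.Coprime n → f (m * n) = f m * f n)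
    (hsum : ∀ {p : ℕ}, p.Prime → Summable fun k => f (p ^ k))
    (hg : Summable g) (hg₀ : ∀ n, 0 ≤ g n)
    (hfg : ∀ {p : ℕ}, p.Prime → ∑' k, f (p ^ k) ≤ 1 + g p) (N : ℕ) :
    ∑ n ∈ Icc 1 N, f n ≤ exp (∑' n, g n) := by
  have hsum' : ∀ {p : ℕ}, p.Prime → Summable fun k => ‖f (p ^ k)‖ := fun hp =>
    summable_norm_iff.mpr (hsum hp)
  obtain ⟨-, hprod⟩ :=
    EulerProduct.summable_and_hasSum_smoothNumbers_prod_primesBelow_tsum hf₁ hmul hsum' (N + 1)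
  have hsmooth : ∀ n ∈ Icc 1 N, n ∈ (N + 1).smoothNumbers := fun n hn => by
    rw [mem_Icc] at hn
    exact Nat.mem_smoothNumbers_of_lt (by omega) (by omega)
  calc ∑ n ∈ Icc 1 N, f n
      = ∑ n ∈ Icc 1 N, (N + 1).smoothNumbers.indicator f n :=
        sum_congr rfl fun n hn => (Set.indicator_of_mem (hsmooth n hn) f).symm
    _ ≤ ∏ p ∈ (N + 1).primesBelow, ∑' k, f (p ^ k) :=
        sum_le_hasSum _ (fun n _ => Set.indicator_nonneg (fun m _ => hf m) n)
          (hasSum_subtype_iff_indicator.mp hprod)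
    _ ≤ ∏ p ∈ (N + 1).primesBelow, (1 + g p) :=
        prod_le_prod (fun p _ => tsum_nonneg fun k => hf _)
          fun p hp => hfg (Nat.prime_of_mem_primesBelow hp)
    _ ≤ exp (∑ p ∈ (N + 1).primesBelow, g p) := prod_one_add_le_exp_sum _ hg₀
    _ ≤ exp (∑' n, g n) := exp_le_exp.mpr (hg.sum_le_tsum _ fun n _ => hg₀ n)

noncomputable def radWeight (δ : ℝ) (n : ℕ) : ℝ := (n : ℝ) ^ (-δ) / rad n

lemma radWeight_nonneg (δ : ℝ) (n : ℕ) : 0 ≤ radWeight δ n := by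
  unfold radWeight; positivity

lemma radWeight_one (δ : ℝ) : radWeight δ 1 = 1 := by simp [radWeight, rad_one]

lemma radWeight_mul_of_coprime (δ : ℝ) {m n : ℕ} (h : m.Coprime n) :
    radWeight δ (m * n) = radWeight δ m * radWeight δ n := by
  simp only [radWeight, Nat.cast_mul, rad_mul_of_coprime h,
    mul_rpow (Nat.cast_nonneg m) (Nat.cast_nonneg n)]
  ring

lemma radWeight_prime_pow_succ (δ : ℝ) {p : ℕ} (hp : p.Prime) (k : ℕ) :
    radWeight δ (p ^ (k + 1)) = (p : ℝ) ^ (-(1 + δ)) * ((p : ℝ) ^ (-δ)) ^ k := by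
  have hp₀ : (0 : ℝ) < p := by exact_mod_cast hp.pos
  rw [radWeight, rad_prime_pow hp k.succ_ne_zero, Nat.cast_pow, ← rpow_natCast, ← rpow_mul hp₀.le,
    mul_comm, rpow_mul hp₀.le, rpow_natCast, pow_succ, show -(1 + δ) = -δ - 1 by ring,
    rpow_sub hp₀, rpow_one]
  ring

lemma hasSum_radWeight_prime_pow {δ : ℝ} (hδ : 0 < δ) {p : ℕ} (hp : p.Prime) :
    HasSum (fun k => radWeight δ (p ^ k)) (1 + (p : ℝ) ^ (-(1 + δ)) / (1 - (p : ℝ) ^ (-δ))) := by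
  have hr : (p : ℝ) ^ (-δ) < 1 :=
    rpow_lt_one_of_one_lt_of_neg (by exact_mod_cast hp.one_lt) (neg_lt_zero.mpr hδ)
  have htail : HasSum (fun k => radWeight δ (p ^ (k + 1)))
      ((p : ℝ) ^ (-(1 + δ)) * (1 - (p : ℝ) ^ (-δ))⁻¹) := by
    simpa only [radWeight_prime_pow_succ δ hp] using
      (hasSum_geometric_of_lt_one (rpow_nonneg p.cast_nonneg _) hr).mul_left _
  simpa only [pow_zero, radWeight_one, div_eq_mul_inv] using
    HasSum.zero_add (f := fun k => radWeight δ (p ^ k)) htail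

lemma tsum_radWeight_prime_pow_le {δ : ℝ} (hδ : 0 < δ) {p : ℕ} (hp : p.Prime) :
    ∑' k, radWeight δ (p ^ k) ≤ 1 + (p : ℝ) ^ (-(1 + δ)) / (1 - 2 ^ (-δ)) := by
  rw [(hasSum_radWeight_prime_pow hδ hp).tsum_eq, add_le_add_iff_left]
  have h2 : (2 : ℝ) ^ (-δ) < 1 := rpow_lt_one_of_one_lt_of_neg one_lt_two (neg_lt_zero.mpr hδ)
  have hp2 : (p : ℝ) ^ (-δ) ≤ 2 ^ (-δ) :=
    rpow_le_rpow_of_nonpos two_pos (by exact_mod_cast hp.two_le) (neg_nonpos.mpr hδ.le)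
  gcongr

theorem exists_sum_Icc_radWeight_le {δ : ℝ} (hδ : 0 < δ) :
    ∃ C, ∀ N, ∑ n ∈ Icc 1 N, radWeight δ n ≤ C := by
  have hg : Summable fun n : ℕ => (n : ℝ) ^ (-(1 + δ)) / (1 - 2 ^ (-δ)) :=
    (summable_nat_rpow.mpr (by linarith)).div_const _
  have h2 : (2 : ℝ) ^ (-δ) < 1 := rpow_lt_one_of_one_lt_of_neg one_lt_two (neg_lt_zero.mpr hδ)
  exact ⟨_, sum_Icc_le_exp_tsum_of_tsum_prime_pow_le (radWeight_nonneg δ) (radWeight_one δ)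
    (radWeight_mul_of_coprime δ) (fun hp => (hasSum_radWeight_prime_pow hδ hp).summable) hg
    (fun n => div_nonneg (rpow_nonneg n.cast_nonneg _) (by linarith))
    (tsum_radWeight_prime_pow_le hδ)⟩

lemma one_div_rad_le_rpow_mul_radWeight {δ : ℝ} (hδ : 0 ≤ δ) {n : ℕ} (hn : n ≠ 0) {X : ℝ}
    (hnX : (n : ℝ) ≤ X) : 1 / (rad n : ℝ) ≤ X ^ δ * radWeight δ n := by
  have hn₀ : (0 : ℝ) < n := by exact_mod_cast Nat.pos_of_ne_zero hn
  have hrad : (0 : ℝ) < rad n := by exact_mod_cast rad_pos n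
  rw [radWeight, rpow_neg hn₀.le, mul_div_assoc', ← div_eq_mul_inv,
    div_le_div_iff_of_pos_right hrad, one_le_div (rpow_pos_of_pos hn₀ δ)]
  exact rpow_le_rpow hn₀.le hnX hδ

/-- for every `ε > 0`, eventually `∑_{1 ≤ n ≤ X} 1/rad(n) ≤ X^ε`. -/
theorem stmt7 (ε : ℝ) (hε : 0 < ε) :
    ∃ X₀ : ℝ, ∀ X : ℝ, X₀ ≤ X →
      ∑ n ∈ Finset.Icc 1 ⌊X⌋₊, (1 : ℝ) / (rad n : ℝ) ≤ X ^ ε := by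
  have hδ : 0 < ε / 2 := half_pos hε
  obtain ⟨C, hC⟩ := exists_sum_Icc_radWeight_le hδ
  obtain ⟨X₀, hX₀⟩ := Filter.eventually_atTop.mp <|
    (Filter.eventually_ge_atTop 0).and <| (tendsto_rpow_atTop hδ).eventually_ge_atTop C
  refine ⟨X₀, fun X hX => ?_⟩
  obtain ⟨hX, hCX⟩ := hX₀ X hX
  have hXδ : 0 ≤ X ^ (ε / 2) := rpow_nonneg hX _
  calc ∑ n ∈ Icc 1 ⌊X⌋₊, (1 : ℝ) / (rad n : ℝ)
      ≤ ∑ n ∈ Icc 1 ⌊X⌋₊, X ^ (ε / 2) * radWeight (ε / 2) n := by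
        refine sum_le_sum fun n hn => one_div_rad_le_rpow_mul_radWeight hδ.le ?_ ?_
        · exact Nat.one_le_iff_ne_zero.mp (mem_Icc.mp hn).1
        · exact (Nat.le_floor_iff hX).mp (mem_Icc.mp hn).2
    _ = X ^ (ε / 2) * ∑ n ∈ Icc 1 ⌊X⌋₊, radWeight (ε / 2) n := (mul_sum ..).symm
    _ ≤ X ^ (ε / 2) * X ^ (ε / 2) := mul_le_mul_of_nonneg_left ((hC _).trans hCX) hXδ
    _ = X ^ ε := by rw [← rpow_add' hX (by positivity), add_halves]
end

section
/- Fix ε > 0. If x₁ = α₁/β₁ and x₂ = α₂/β₂ are chosen independently and uniformly at random from the set of rationals α/β in lowest terms with |α| ≤ X and 1 ≤ β ≤ X, then the probability that gcd(β₁, β₂) ≥ X^{2ε} is O_ε(X^{−ε}). -/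
/-!
A pair of rationals of height at most `X` whose denominators have gcd at least `m` has both
denominators divisible by some `d ∈ [m, X]`; for fixed `d` there are at most `(3X · X/d)²` such
pairs, and `∑_{d ≥ m} d⁻² ≤ 2/m`, so there are `O(X⁴/m)` of them. Conversely, distinct coprime
pairs `(a, b) ∈ [1, n]²` give distinct rationals `a/b`, and at most `∑_{d ≥ 2} (n/d)² ≤ 3n²/4`
pairs are not coprime, so there are at least `X²/16` rationals of height at most `X`. Taking
`m = ⌈X^{2ε}⌉` bounds the proportion by `O(X^{-2ε})`, without the divisor bound.
-/

open Finset

def ratsOfHeightLE (X : ℝ) : Set ℚ := {x : ℚ | (|x.num| : ℝ) ≤ X ∧ (x.den : ℝ) ≤ X}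

noncomputable def numDenBox (n d : ℕ) : Finset (ℤ × ℕ) := Icc (-(n : ℤ)) n ×ˢ {b ∈ Ioc 0 n | d ∣ b}

lemma sum_Icc_inv_sq_le {m : ℕ} (hm : m ≠ 0) (n : ℕ) :
    ∑ d ∈ Icc m n, ((d : ℝ) ^ 2)⁻¹ ≤ ((m : ℝ) ^ 2)⁻¹ + (m : ℝ)⁻¹ := by
  rcases le_or_gt m n with hmn | hnm
  · rw [Icc_eq_cons_Ioc hmn, sum_cons]
    have := sum_Ioc_inv_sq_le_sub (α := ℝ) hm hmn
    have : (0 : ℝ) ≤ (n : ℝ)⁻¹ := by positivity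
    linarith
  · rw [Icc_eq_empty_of_lt hnm, sum_empty]
    positivity

lemma card_numDenBox (n d : ℕ) : #(numDenBox n d) = (2 * n + 1) * (n / d) := by
  rw [numDenBox, card_product, Nat.Ioc_filter_dvd_card_eq_div, Int.card_Icc]
  congr 1
  omega

lemma card_numDenBox_floor_le {X : ℝ} (hX : 1 ≤ X) {d : ℕ} (hd : d ≠ 0) :
    (#(numDenBox ⌊X⌋₊ d) : ℝ) ≤ 3 * X ^ 2 / d := by
  have hn : (⌊X⌋₊ : ℝ) ≤ X := Nat.floor_le (by linarith)
  rw [card_numDenBox, Nat.cast_mul]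
  calc ((2 * ⌊X⌋₊ + 1 : ℕ) : ℝ) * ((⌊X⌋₊ / d : ℕ) : ℝ) ≤ (3 * X) * (X / d) := by
        gcongr
        · push_cast; linarith
        · exact Nat.cast_div_le.trans (by gcongr)
    _ = 3 * X ^ 2 / d := by ring

lemma numDen_mem_numDenBox {X : ℝ} {x : ℚ} (hx : x ∈ ratsOfHeightLE X) {d : ℕ}
    (hd : d ∣ x.den) : (x.num, x.den) ∈ numDenBox ⌊X⌋₊ d := by
  obtain ⟨hnum, hden⟩ := hx
  have hnum' : x.num.natAbs ≤ ⌊X⌋₊ := Nat.le_floor (by rwa [Nat.cast_natAbs, Int.cast_abs])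
  simp only [numDenBox, mem_product, mem_Icc, mem_filter, mem_Ioc]
  exact ⟨⟨by omega, by omega⟩, ⟨x.pos, Nat.le_floor hden⟩, hd⟩

lemma numDen_injective : Function.Injective fun x : ℚ => (x.num, x.den) :=
  fun _ _ h => Rat.ext (congrArg Prod.fst h) (congrArg Prod.snd h)

lemma ratsOfHeightLE_finite (X : ℝ) : (ratsOfHeightLE X).Finite :=
  Set.Finite.of_injOn (fun _ hx => numDen_mem_numDenBox hx (one_dvd _))
    numDen_injective.injOn (numDenBox ⌊X⌋₊ 1).finite_toSet

lemma ncard_pairs_le_of_le_gcd_den {X : ℝ} (hX : 1 ≤ X) {m : ℕ} (hm : m ≠ 0) :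
    ({p : ℚ × ℚ | p.1 ∈ ratsOfHeightLE X ∧ p.2 ∈ ratsOfHeightLE X ∧
        m ≤ Nat.gcd p.1.den p.2.den}.ncard : ℝ) ≤ 18 * X ^ 4 / m := by
  set n := ⌊X⌋₊
  set Q := (Icc m n).biUnion fun d => numDenBox n d ×ˢ numDenBox n d
  have hmaps : ∀ p ∈ {p : ℚ × ℚ | p.1 ∈ ratsOfHeightLE X ∧ p.2 ∈ ratsOfHeightLE X ∧
      m ≤ Nat.gcd p.1.den p.2.den}, ((p.1.num, p.1.den), (p.2.num, p.2.den)) ∈ (Q : Set _) := by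
    rintro ⟨x, y⟩ ⟨hx, hy, hg⟩
    refine mem_biUnion.2 ⟨Nat.gcd x.den y.den,
      mem_Icc.2 ⟨hg, (Nat.gcd_le_left _ x.pos).trans (Nat.le_floor hx.2)⟩,
      mem_product.2 ⟨numDen_mem_numDenBox hx (Nat.gcd_dvd_left _ _),
        numDen_mem_numDenBox hy (Nat.gcd_dvd_right _ _)⟩⟩
  have hcard := Set.ncard_le_ncard_of_injOn _ hmaps
    (numDen_injective.prodMap numDen_injective).injOn
  rw [Set.ncard_coe_finset] at hcard
  have hQ : (#Q : ℝ) ≤ ∑ d ∈ Icc m n, (#(numDenBox n d) : ℝ) ^ 2 := by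
    refine (Nat.cast_le.2 card_biUnion_le).trans ?_
    push_cast [card_product, sq]
    rfl
  have hm' : (1 : ℝ) ≤ m := Nat.one_le_cast.2 (Nat.one_le_iff_ne_zero.2 hm)
  calc _ ≤ (#Q : ℝ) := by exact_mod_cast hcard
    _ ≤ ∑ d ∈ Icc m n, (3 * X ^ 2 / d) ^ 2 := hQ.trans <| sum_le_sum fun d hd => by
        have hd : d ≠ 0 := by have := (mem_Icc.1 hd).1; omega
        gcongr
        exact card_numDenBox_floor_le hX hd
    _ = 9 * X ^ 4 * ∑ d ∈ Icc m n, ((d : ℝ) ^ 2)⁻¹ := by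
        rw [mul_sum]; congr 1 with d; ring
    _ ≤ 9 * X ^ 4 * (((m : ℝ) ^ 2)⁻¹ + (m : ℝ)⁻¹) := by gcongr; exact sum_Icc_inv_sq_le hm n
    _ ≤ 9 * X ^ 4 * ((m : ℝ)⁻¹ + (m : ℝ)⁻¹) := by
        have : ((m : ℝ) ^ 2)⁻¹ ≤ (m : ℝ)⁻¹ := inv_anti₀ (by linarith) (by nlinarith)
        gcongr
    _ = 18 * X ^ 4 / m := by ring

def coprimePairs (n : ℕ) : Finset (ℕ × ℕ) := {p ∈ Ioc 0 n ×ˢ Ioc 0 n | p.1.Coprime p.2}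

lemma card_filter_not_coprime_le (n : ℕ) :
    (#{p ∈ Ioc 0 n ×ˢ Ioc 0 n | ¬ Nat.Coprime p.1 p.2} : ℝ) ≤ 3 / 4 * n ^ 2 := by
  have hsub : {p ∈ Ioc 0 n ×ˢ Ioc 0 n | ¬ Nat.Coprime p.1 p.2} ⊆
      (Icc 2 n).biUnion fun d => {a ∈ Ioc 0 n | d ∣ a} ×ˢ {b ∈ Ioc 0 n | d ∣ b} := by
    intro p hp
    simp only [mem_filter, mem_product, mem_Ioc] at hp
    obtain ⟨⟨⟨ha0, han⟩, hb0, hbn⟩, hcop⟩ := hp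
    have hg : 0 < Nat.gcd p.1 p.2 := Nat.gcd_pos_of_pos_left _ ha0
    refine mem_biUnion.2 ⟨Nat.gcd p.1 p.2, mem_Icc.2 ⟨?_, (Nat.gcd_le_left _ ha0).trans han⟩, ?_⟩
    · have : Nat.gcd p.1 p.2 ≠ 1 := hcop
      omega
    · simp only [mem_product, mem_filter, mem_Ioc]
      exact ⟨⟨⟨ha0, han⟩, Nat.gcd_dvd_left _ _⟩, ⟨hb0, hbn⟩, Nat.gcd_dvd_right _ _⟩
  calc _ ≤ ∑ d ∈ Icc 2 n, (((n / d : ℕ) : ℝ)) ^ 2 := by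
        refine (Nat.cast_le.2 ((card_le_card hsub).trans card_biUnion_le)).trans ?_
        push_cast [card_product, Nat.Ioc_filter_dvd_card_eq_div, sq]
        rfl
    _ ≤ ∑ d ∈ Icc 2 n, (n : ℝ) ^ 2 * ((d : ℝ) ^ 2)⁻¹ := sum_le_sum fun d _ => by
        rw [← div_eq_mul_inv, ← div_pow]
        gcongr
        exact Nat.cast_div_le
    _ ≤ (n : ℝ) ^ 2 * (((2 : ℕ) : ℝ) ^ 2)⁻¹ + (n : ℝ) ^ 2 * ((2 : ℕ) : ℝ)⁻¹ := by
        rw [← mul_sum, ← mul_add]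
        gcongr
        exact sum_Icc_inv_sq_le two_ne_zero n
    _ = 3 / 4 * n ^ 2 := by norm_num; ring

lemma sq_le_four_mul_card_coprimePairs (n : ℕ) : n ^ 2 ≤ 4 * #(coprimePairs n) := by
  rw [coprimePairs]
  have hsplit := card_filter_add_card_filter_not (s := Ioc 0 n ×ˢ Ioc 0 n)
    (fun p => Nat.Coprime p.1 p.2)
  rw [card_product, Nat.card_Ioc, Nat.sub_zero] at hsplit
  have hbad := card_filter_not_coprime_le n
  have : (n : ℝ) ^ 2 ≤ 4 * #{p ∈ Ioc 0 n ×ˢ Ioc 0 n | p.1.Coprime p.2} := by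
    have := congrArg (Nat.cast : ℕ → ℝ) hsplit
    push_cast at this
    nlinarith
  exact_mod_cast this

lemma Rat.num_den_natCast_div_of_coprime {a b : ℕ} (hb : 0 < b) (h : a.Coprime b) :
    ((a : ℚ) / b).num = a ∧ ((a : ℚ) / b).den = b := by
  have hb' : (0 : ℤ) < b := by exact_mod_cast hb
  have h' : Nat.Coprime (a : ℤ).natAbs (b : ℤ).natAbs := h
  have hnum := Rat.num_div_eq_of_coprime hb' h'
  have hden := Rat.den_div_eq_of_coprime hb' h'
  push_cast at hnum hden
  exact ⟨hnum, by exact_mod_cast hden⟩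

lemma sq_le_sixteen_mul_ncard_ratsOfHeightLE {X : ℝ} (hX : 1 ≤ X) :
    X ^ 2 ≤ 16 * (ratsOfHeightLE X).ncard := by
  set n := ⌊X⌋₊
  have hn : (n : ℝ) ≤ X := Nat.floor_le (by linarith)
  have hXn : X ≤ 2 * n := by
    have h1 := Nat.lt_floor_add_one X
    have h2 : (1 : ℝ) ≤ n := by exact_mod_cast Nat.le_floor (by exact_mod_cast hX)
    linarith
  have hmaps : ∀ p ∈ (coprimePairs n : Set (ℕ × ℕ)),
      (p.1 : ℚ) / p.2 ∈ ratsOfHeightLE X := by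
    rintro ⟨a, b⟩ hp
    simp only [coprimePairs, coe_filter, mem_product, mem_Ioc, Set.mem_ofPred_eq] at hp
    obtain ⟨⟨⟨-, ha⟩, hb0, hb⟩, hcop⟩ := hp
    obtain ⟨hnum, hden⟩ := Rat.num_den_natCast_div_of_coprime hb0 hcop
    refine ⟨?_, ?_⟩
    · rw [hnum]; push_cast; rw [abs_of_nonneg (by positivity)]
      exact le_trans (by exact_mod_cast ha) hn
    · rw [hden]; exact le_trans (by exact_mod_cast hb) hn
  have hinj : Set.InjOn (fun p : ℕ × ℕ => (p.1 : ℚ) / p.2)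
      (coprimePairs n : Set (ℕ × ℕ)) := by
    rintro ⟨a, b⟩ hab ⟨c, d⟩ hcd h
    simp only [coprimePairs, coe_filter, mem_product, mem_Ioc, Set.mem_ofPred_eq] at hab hcd
    obtain ⟨hnum₁, hden₁⟩ := Rat.num_den_natCast_div_of_coprime hab.1.2.1 hab.2
    obtain ⟨hnum₂, hden₂⟩ := Rat.num_den_natCast_div_of_coprime hcd.1.2.1 hcd.2
    simp only at h
    rw [h] at hnum₁ hden₁
    simp only [Prod.mk.injEq]
    omega
  have hcard := Set.ncard_le_ncard_of_injOn _ hmaps hinj (ratsOfHeightLE_finite X)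
  rw [Set.ncard_coe_finset] at hcard
  have := sq_le_four_mul_card_coprimePairs n
  have h4 : (n : ℝ) ^ 2 ≤ 4 * (ratsOfHeightLE X).ncard := by
    exact_mod_cast this.trans (Nat.mul_le_mul_left 4 hcard)
  nlinarith

/-- for two independent uniformly random rationals of height at most
`X`, the probability that the gcd of their denominators exceeds `X^{2ε}` is
`O_ε(X^{-ε})`, stated as a counting bound on pairs. -/
theorem stmt9 (ε : ℝ) (hε : 0 < ε) :
    ∃ C > (0 : ℝ), ∀ X : ℝ, 1 ≤ X →
      (({p : ℚ × ℚ |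
          ((|p.1.num| : ℝ) ≤ X ∧ (p.1.den : ℝ) ≤ X) ∧
          ((|p.2.num| : ℝ) ≤ X ∧ (p.2.den : ℝ) ≤ X) ∧
          X ^ (2 * ε) ≤ (Nat.gcd p.1.den p.2.den : ℝ)}).ncard : ℝ) ≤
        C * X ^ (-ε) *
          (({x : ℚ | (|x.num| : ℝ) ≤ X ∧ (x.den : ℝ) ≤ X}).ncard : ℝ) ^ 2 := by
  refine ⟨4608, by norm_num, fun X hX => ?_⟩
  have hX0 : 0 < X := by linarith
  set m := ⌈X ^ (2 * ε)⌉₊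
  have hm : m ≠ 0 := (Nat.ceil_pos.2 (Real.rpow_pos_of_pos hX0 _)).ne'
  have hpairs : {p : ℚ × ℚ |
      ((|p.1.num| : ℝ) ≤ X ∧ (p.1.den : ℝ) ≤ X) ∧ ((|p.2.num| : ℝ) ≤ X ∧ (p.2.den : ℝ) ≤ X) ∧
        X ^ (2 * ε) ≤ (Nat.gcd p.1.den p.2.den : ℝ)} =
      {p : ℚ × ℚ | p.1 ∈ ratsOfHeightLE X ∧ p.2 ∈ ratsOfHeightLE X ∧
        m ≤ Nat.gcd p.1.den p.2.den} := by
    simp only [m, Nat.ceil_le]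
    rfl
  have hdecay : (m : ℝ)⁻¹ ≤ X ^ (-ε) := by
    rw [Real.rpow_neg hX0.le]
    refine inv_anti₀ (by positivity) ?_
    calc X ^ ε ≤ X ^ (2 * ε) := Real.rpow_le_rpow_of_exponent_le hX (by linarith)
      _ ≤ m := Nat.le_ceil _
  have hupper := ncard_pairs_le_of_le_gcd_den hX hm
  have hlower := sq_le_sixteen_mul_ncard_ratsOfHeightLE hX
  rw [hpairs]
  change _ ≤ _ * (((ratsOfHeightLE X).ncard : ℝ)) ^ 2
  calc _ ≤ 18 * X ^ 4 * (m : ℝ)⁻¹ := hupper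
    _ ≤ 18 * (16 * ((ratsOfHeightLE X).ncard : ℝ)) ^ 2 * X ^ (-ε) := by
        gcongr
        nlinarith
    _ = _ := by ring
end

section
/- Let f be a monic complex polynomial of degree d ≥ 2 whose escape-rate function G_f satisfies: G_f is continuous, nonnegative, harmonic off the filled Julia set, G_f(z) − log|z| → 0 as |z| → ∞, and G_f(z) ≤ d·M·dist(z, K_f)^α for constants M, A = (3d/2)(R+1)^{d-1}, α = log d / log A as in the text. Then G_f is uniformly Hölder continuous: |G_f(z₁) − G_f(z₂)| ≤ 3dM|z₁ − z₂|^α for all z₁, z₂ ∈ ℂ. -/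
/-!
Off `K` the function `G` is harmonic, so on the ball `B(x, r)` with `r = dist(x, K)` it is the
real part of a holomorphic `F` with `Re F ≥ 0`. The Schwarz lemma applied to the Cayley transform
`(F - F x) / (F + conj (F x))`, which maps the right half-plane into the unit disc, yields the
Harnack-type estimate `G x - G y ≤ 2 (|x - y| / r) G x`. If `|x - y| ≥ r`, the bound
`G x ≤ d M r ^ α` alone gives the Hölder estimate; otherwise combine it with the Harnack estimate
and `|x - y| / r ≤ (|x - y| / r) ^ α`.
-/

open Filter Metric Set Complex InnerProductSpace ComplexConjugate Topology

theorem norm_sub_lt_norm_add_conj {p q : ℂ} (hp : 0 < p.re) (hq : 0 < q.re) :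
    ‖q - p‖ < ‖q + conj p‖ := by
  rw [← sq_lt_sq₀ (norm_nonneg _) (norm_nonneg _), Complex.sq_norm, Complex.sq_norm,
    normSq_apply, normSq_apply]
  simp only [sub_re, sub_im, add_re, add_im, conj_re, conj_im]
  nlinarith

theorem re_sub_re_le_of_norm_sub_le {p q : ℂ} {t : ℝ} (ht : 0 ≤ t) (hp : 0 < p.re)
    (hq : 0 < q.re) (h : ‖q - p‖ ≤ t * ‖q + conj p‖) : p.re - q.re ≤ 2 * t * p.re := by
  have hsq := pow_le_pow_left₀ (norm_nonneg _) h 2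
  rw [mul_pow, Complex.sq_norm, Complex.sq_norm, normSq_apply, normSq_apply] at hsq
  simp only [sub_re, sub_im, add_re, add_im, conj_re, conj_im] at hsq
  rcases le_total 1 t with ht1 | ht1
  · nlinarith
  rcases le_total p.re q.re with hpq | hpq
  · nlinarith
  have hsq' : (p.re - q.re) ^ 2 ≤ (t * (q.re + p.re)) ^ 2 := by
    nlinarith [sq_nonneg (q.im - p.im), mul_le_mul ht1 ht1 ht zero_le_one]
  have := (pow_le_pow_iff_left₀ (sub_nonneg.2 hpq) (by positivity) two_ne_zero).1 hsq'
  nlinarith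

theorem re_sub_re_le_of_differentiableOn_ball {F : ℂ → ℂ} {x y : ℂ} {r : ℝ}
    (hF : DifferentiableOn ℂ F (ball x r)) (hre : ∀ z ∈ ball x r, 0 < (F z).re)
    (hy : y ∈ ball x r) : (F x).re - (F y).re ≤ 2 * (dist y x / r) * (F x).re := by
  have hr : 0 < r := pos_of_mem_ball hy
  have hx : x ∈ ball x r := mem_ball_self hr
  have hden : ∀ z ∈ ball x r, F z + conj (F x) ≠ 0 := fun z hz =>
    ne_zero_of_norm_ne_zero ((norm_nonneg _).trans_lt
      (norm_sub_lt_norm_add_conj (hre x hx) (hre z hz))).ne'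
  set Φ : ℂ → ℂ := fun z => (F z - F x) / (F z + conj (F x))
  have hΦ : DifferentiableOn ℂ Φ (ball x r) :=
    ((hF.sub_const _).div (hF.add_const _) hden)
  have hmaps : MapsTo Φ (ball x r) (closedBall (Φ x) 1) := fun z hz => by
    simp only [Φ, sub_self, zero_div, mem_closedBall, dist_zero_right, norm_div]
    exact div_le_one_of_le₀ (norm_sub_lt_norm_add_conj (hre x hx) (hre z hz)).le (norm_nonneg _)
  have hSchwarz := dist_le_div_mul_dist_of_mapsTo_ball hΦ hmaps hy
  simp only [Φ, sub_self, zero_div, dist_zero_right, norm_div, one_div_mul_eq_div] at hSchwarz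
  rw [div_le_iff₀ (norm_pos_iff.2 (hden y hy))] at hSchwarz
  exact re_sub_re_le_of_norm_sub_le (by positivity) (hre x hx) (hre y hy) hSchwarz

theorem InnerProductSpace.HarmonicOnNhd.sub_le_of_nonneg {u : ℂ → ℝ} {x y : ℂ} {r : ℝ}
    (hu : HarmonicOnNhd u (ball x r)) (hu0 : ∀ z ∈ ball x r, 0 ≤ u z) (hy : y ∈ ball x r) :
    u x - u y ≤ 2 * (dist y x / r) * u x := by
  obtain ⟨F, hF, hFu⟩ := hu.exists_analyticOnNhd_ball_re_eq
  have hx : x ∈ ball x r := mem_ball_self (pos_of_mem_ball hy)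
  -- The Cayley transform needs `0 < Re F x`, so shift by `ε` and let `ε → 0`.
  have hε : ∀ ε > (0 : ℝ), u x - u y ≤ 2 * (dist y x / r) * (u x + ε) := fun ε hε => by
    have := re_sub_re_le_of_differentiableOn_ball (F := fun z => F z + ε)
      (hF.differentiableOn.add_const _) (fun z hz => by simp [hFu hz]; linarith [hu0 z hz]) hy
    simpa [hFu hx, hFu hy] using this
  have hlim : Tendsto (fun ε : ℝ => 2 * (dist y x / r) * (u x + ε)) (𝓝[>] 0)
      (𝓝 (2 * (dist y x / r) * u x)) :=
    tendsto_nhdsWithin_of_tendsto_nhds (by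
      simpa using (Continuous.tendsto (f := fun ε : ℝ => 2 * (dist y x / r) * (u x + ε))
        (by fun_prop) 0))
  exact ge_of_tendsto hlim (eventually_nhdsWithin_of_forall hε)

theorem harmonicAt_of_eqOn_re {u : ℂ → ℝ} {F : ℂ → ℂ} {z : ℂ} {r : ℝ} (hr : 0 < r)
    (hF : DifferentiableOn ℂ F (ball z r)) (hFu : ∀ w ∈ ball z r, u w = (F w).re) :
    HarmonicAt u z :=
  (harmonicAt_congr_nhds (eventually_of_mem (ball_mem_nhds z hr) hFu)).2
    (hF.analyticAt (ball_mem_nhds z hr)).harmonicAt_re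

theorem abs_sub_le_of_le_mul_infDist_rpow {u : ℂ → ℝ} {K : Set ℂ} {C α : ℝ} (hC : 0 ≤ C)
    (hα0 : 0 ≤ α) (hα1 : α ≤ 1) (hu : HarmonicOnNhd u Kᶜ) (hu0 : ∀ z, 0 ≤ u z)
    (hbound : ∀ z, u z ≤ C * infDist z K ^ α) (z₁ z₂ : ℂ) :
    |u z₁ - u z₂| ≤ 2 * C * dist z₁ z₂ ^ α := by
  suffices key : ∀ x y, u x - u y ≤ 2 * C * dist y x ^ α by
    exact abs_sub_le_iff.2 ⟨dist_comm z₁ z₂ ▸ key z₁ z₂, key z₂ z₁⟩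
  intro x y
  set ρ := dist y x
  set r := infDist x K
  rcases le_or_gt r ρ with hρr | hρr
  · calc u x - u y ≤ C * r ^ α := by linarith [hbound x, hu0 y]
      _ ≤ C * ρ ^ α := by gcongr; exact infDist_nonneg
      _ ≤ 2 * C * ρ ^ α := by
          have : 0 ≤ ρ ^ α := by positivity
          nlinarith
  · have hr : 0 < r := dist_nonneg.trans_lt hρr
    have hball : ball x r ⊆ Kᶜ := fun w hw hwK => by
      have := infDist_le_dist_of_mem (x := x) hwK
      rw [mem_ball, dist_comm] at hw
      linarith
    have hHarnack : u x - u y ≤ 2 * (ρ / r) * u x :=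
      (hu.mono hball).sub_le_of_nonneg (fun z _ => hu0 z) (mem_ball.2 hρr)
    calc u x - u y ≤ 2 * (ρ / r) * (C * r ^ α) := by
          refine hHarnack.trans (mul_le_mul_of_nonneg_left (hbound x) ?_)
          positivity
      _ ≤ 2 * (ρ / r) ^ α * (C * r ^ α) := by
          gcongr
          exact Real.self_le_rpow_of_le_one (by positivity) ((div_le_one hr).2 hρr.le) hα1
      _ = 2 * C * ρ ^ α := by
          rw [Real.div_rpow (by positivity : (0 : ℝ) ≤ ρ) hr.le]
          field_simp

/-- uniform Hölder continuity of the escape-rate function of a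
monic complex polynomial: `|G_f(z₁) − G_f(z₂)| ≤ 3dM|z₁ − z₂|^α`. -/
theorem stmt12 (d : ℕ) (hd : 2 ≤ d) (a : ℕ → ℂ)
    (K : Set ℂ)
    (R M A α : ℝ)
    (hR : R = 3 * (Finset.range d).sup' (Finset.nonempty_range_iff.mpr (by omega))
      (fun i => max 1 (‖a i‖ ^ ((1 : ℝ) / ((d - i : ℕ) : ℝ)))))
    (hM : M = Real.log (2 * R + 1))
    (hA : A = 3 * d / 2 * (R + 1) ^ (d - 1))
    (hα : α = Real.log d / Real.log A)
    (G : ℂ → ℝ)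
    (hGnonneg : ∀ z, 0 ≤ G z)
    (hharm : ∀ z ∉ K, ∃ r > (0 : ℝ), ∃ h : ℂ → ℂ,
      DifferentiableOn ℂ h (Metric.ball z r) ∧
      ∀ w ∈ Metric.ball z r, G w = (h w).re)
    (hbound : ∀ z : ℂ, G z ≤ d * M * (Metric.infDist z K) ^ α) :
    ∀ z₁ z₂ : ℂ, |G z₁ - G z₂| ≤ 3 * d * M * ‖z₁ - z₂‖ ^ α := by
  have hR0 : 0 ≤ R := by
    rw [hR]
    linarith [Finset.le_sup'_of_le (fun i => max 1 (‖a i‖ ^ ((1 : ℝ) / ((d - i : ℕ) : ℝ))))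
      (Finset.mem_range.2 (by omega : 0 < d)) (le_max_left _ _)]
  have hd1 : (1 : ℝ) ≤ d := by exact_mod_cast (by omega : 1 ≤ d)
  have hdA : (d : ℝ) ≤ A := by
    rw [hA]
    nlinarith [one_le_pow₀ (by linarith : (1 : ℝ) ≤ R + 1) (n := d - 1)]
  have hdM : 0 ≤ d * M := mul_nonneg (by positivity) (hM ▸ Real.log_nonneg (by linarith))
  have hα0 : 0 ≤ α := hα ▸ div_nonneg (Real.log_nonneg hd1) (Real.log_nonneg (hd1.trans hdA))
  have hα1 : α ≤ 1 :=
    hα ▸ div_le_one_of_le₀ (Real.log_le_log (by linarith) hdA) (Real.log_nonneg (hd1.trans hdA))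
  have hGharm : HarmonicOnNhd G Kᶜ := fun z hz => by
    obtain ⟨r, hr, h, hh, hGh⟩ := hharm z hz
    exact harmonicAt_of_eqOn_re hr hh hGh
  intro z₁ z₂
  calc |G z₁ - G z₂| ≤ 2 * (d * M) * ‖z₁ - z₂‖ ^ α := by
        simpa [dist_eq_norm] using
          abs_sub_le_of_le_mul_infDist_rpow hdM hα0 hα1 hGharm hGnonneg hbound z₁ z₂
    _ ≤ 3 * d * M * ‖z₁ - z₂‖ ^ α := by
        have : 0 ≤ ‖z₁ - z₂‖ ^ α := by positivity
        nlinarith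
end

section
/- Let f, g be monic complex polynomials of the same degree d ≥ 2 with coefficients a_{d-1},...,a_0 and b_{d-1},...,b_0 respectively, and let μ_f, μ_g be their equilibrium (invariant) measures on ℂ. If a_{d-j} = b_{d-j} for all 1 ≤ j < k for some k < d, then ∫ z^k dμ_f(z) − ∫ z^k dμ_g(z) = −(k/d)(a_{d-k} − b_{d-k}). -/
open MeasureTheory Polynomial

/-! Subtracting a constant `c` from a monic `P` of degree `d` only changes its constant
coefficient, so by Vieta the elementary symmetric functions `e_j` of the roots of `P - c` with
`j < d` do not depend on `c`, and by Newton's identities neither does the power sum `p_k` for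
`k < d`. The invariance of the equilibrium measure then gives `∫ z^k dμ = p_k(roots P) / d`.
Newton's identities also show that `p_k + (-1)^k k e_k` is a polynomial in `e_1, …, e_{k-1}`,
so if these agree for `F` and `G`, then `p_k(F) - p_k(G) = (-1)^(k+1) k (e_k(F) - e_k(G))`,
which Vieta turns into `-k (a_{d-k} - b_{d-k})`. -/

namespace Multiset

variable {R : Type*} [CommRing R]

noncomputable def psum (s : Multiset R) (k : ℕ) : R := (s.map (· ^ k)).sum

theorem psum_eq_mul_esymm_sub_sum (s : Multiset R) {k : ℕ} (hk : 0 < k) :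
    s.psum k = (-1) ^ (k + 1) * k * s.esymm k -
      ∑ a ∈ Finset.HasAntidiagonal.antidiagonal k with a.1 ∈ Set.Ioo 0 k,
        (-1) ^ a.1 * s.esymm a.1 * s.psum a.2 := by
  obtain ⟨l, rfl⟩ : ∃ l : List R, (l : Multiset R) = s := Quot.exists_rep s
  have hl : Finset.univ.val.map l.get = (l : Multiset R) := by
    rw [Fin.univ_val_map, List.ofFn_get]
  have aeval_psum (n : ℕ) :
      MvPolynomial.aeval l.get (MvPolynomial.psum (Fin l.length) R n) = psum l n := by
    simp only [MvPolynomial.psum, map_sum, map_pow, MvPolynomial.aeval_X, psum, ← hl,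
      Multiset.map_map]
    rfl
  have aeval_esymm (n : ℕ) :
      MvPolynomial.aeval l.get (MvPolynomial.esymm (Fin l.length) R n) = esymm l n := by
    rw [MvPolynomial.aeval_esymm_eq_multiset_esymm, hl]
  simpa only [map_sub, map_sum, map_mul, map_pow, map_neg, map_one, map_natCast, aeval_psum,
    aeval_esymm] using
    congrArg (MvPolynomial.aeval l.get) (MvPolynomial.psum_eq_mul_esymm_sub_sum _ R k hk)

theorem psum_sub_psum_of_esymm_eq (s t : Multiset R) {k : ℕ} (hk : 0 < k)
    (h : ∀ j ∈ Set.Ioo 0 k, s.esymm j = t.esymm j) :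
    s.psum k - t.psum k = (-1) ^ (k + 1) * k * (s.esymm k - t.esymm k) := by
  induction k using Nat.strong_induction_on with
  | _ k ih =>
  have psum_eq {i : ℕ} (hi : i ∈ Set.Ioo 0 k) : s.psum i = t.psum i := by
    rw [← sub_eq_zero, ih i hi.2 hi.1 fun j hj ↦ h j ⟨hj.1, hj.2.trans hi.2⟩,
      h i hi, sub_self, mul_zero]
  rw [psum_eq_mul_esymm_sub_sum s hk, psum_eq_mul_esymm_sub_sum t hk]
  have tail_eq : ∑ a ∈ Finset.HasAntidiagonal.antidiagonal k with a.1 ∈ Set.Ioo 0 k,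
        (-1) ^ a.1 * s.esymm a.1 * s.psum a.2 =
      ∑ a ∈ Finset.HasAntidiagonal.antidiagonal k with a.1 ∈ Set.Ioo 0 k,
        (-1) ^ a.1 * t.esymm a.1 * t.psum a.2 := by
    refine Finset.sum_congr rfl fun a ha ↦ ?_
    obtain ⟨hsum, hpos, hlt⟩ := by simpa using ha
    rw [h a.1 ⟨hpos, hlt⟩, psum_eq ⟨by omega, by omega⟩]
  rw [tail_eq]
  ring

end Multiset

namespace Polynomial

variable {K : Type*} [Field K]

theorem Monic.esymm_roots {P : K[X]} (hP : P.Monic) (hsplit : P.Splits) {j : ℕ}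
    (hj : j ≤ P.natDegree) : P.roots.esymm j = (-1) ^ j * P.coeff (P.natDegree - j) := by
  rw [coeff_eq_esymm_roots_of_splits hsplit (Nat.sub_le _ _), Nat.sub_sub_self hj,
    hP.leadingCoeff, one_mul, ← mul_assoc, ← pow_add, Even.neg_one_pow ⟨j, rfl⟩, one_mul]

variable [IsAlgClosed K]

theorem Monic.esymm_roots_sub_C {P : K[X]} (hP : P.Monic) (c : K) {j : ℕ}
    (hj : j < P.natDegree) : (P - C c).roots.esymm j = P.roots.esymm j := by
  have hPc : (P - C c).Monic :=
    hP.sub_of_left (degree_C_le.trans_lt (natDegree_pos_iff_degree_pos.1 (by omega)))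
  rw [hPc.esymm_roots (IsAlgClosed.splits _) (by rw [natDegree_sub_C]; omega),
    hP.esymm_roots (IsAlgClosed.splits _) hj.le, natDegree_sub_C, coeff_sub, coeff_C,
    if_neg (by omega), sub_zero]

theorem Monic.psum_roots_sub_C {P : K[X]} (hP : P.Monic) (c : K) {k : ℕ} (hk : 0 < k)
    (hkP : k < P.natDegree) : (P - C c).roots.psum k = P.roots.psum k := by
  rw [← sub_eq_zero, Multiset.psum_sub_psum_of_esymm_eq _ _ hk
      fun j hj ↦ hP.esymm_roots_sub_C c (hj.2.trans hkP),
    hP.esymm_roots_sub_C c hkP, sub_self, mul_zero]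

end Polynomial

theorem integral_pow_eq_psum_roots {d k : ℕ} (hk : 0 < k) (hkd : k < d) {P : ℂ[X]}
    (hP : P.Monic) (hPd : P.natDegree = d) (μ : Measure ℂ) [IsProbabilityMeasure μ]
    (hμ : ∀ φ : ℂ → ℂ, Continuous φ →
      ∫ z, φ z ∂μ = (d : ℂ)⁻¹ * ∫ c, ((P - C c).roots.map φ).sum ∂μ) :
    ∫ z, z ^ k ∂μ = (d : ℂ)⁻¹ * P.roots.psum k := by
  subst hPd
  have psum_roots_sub_C (c : ℂ) : ((P - C c).roots.map (· ^ k)).sum = P.roots.psum k :=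
    hP.psum_roots_sub_C c hk hkd
  rw [hμ _ (continuous_pow k)]
  simp_rw [psum_roots_sub_C, integral_const, probReal_univ, one_smul]

theorem stmt13_general (d k : ℕ) (hk1 : 1 ≤ k) (hkd : k < d)
    (F G : Polynomial ℂ) (hFm : F.Monic) (hFd : F.natDegree = d)
    (hGm : G.Monic) (hGd : G.natDegree = d)
    (μf μg : Measure ℂ)
    [IsProbabilityMeasure μf] [IsProbabilityMeasure μg]
    (hμf : ∀ φ : ℂ → ℂ, Continuous φ →
      ∫ z, φ z ∂μf = (d : ℂ)⁻¹ * ∫ c, ((F - C c).roots.map φ).sum ∂μf)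
    (hμg : ∀ φ : ℂ → ℂ, Continuous φ →
      ∫ z, φ z ∂μg = (d : ℂ)⁻¹ * ∫ c, ((G - C c).roots.map φ).sum ∂μg)
    (hcoef : ∀ j, 1 ≤ j → j < k → F.coeff (d - j) = G.coeff (d - j)) :
    (∫ z, z ^ k ∂μf) - (∫ z, z ^ k ∂μg) =
      -((k : ℂ) / (d : ℂ)) * (F.coeff (d - k) - G.coeff (d - k)) := by
  have esymm_roots {P : ℂ[X]} (hP : P.Monic) (hPd : P.natDegree = d) {j : ℕ} (hj : j ≤ k) :
      P.roots.esymm j = (-1) ^ j * P.coeff (d - j) := by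
    rw [hP.esymm_roots (IsAlgClosed.splits P) (by omega), hPd]
  have esymm_eq : ∀ j ∈ Set.Ioo 0 k, F.roots.esymm j = G.roots.esymm j := fun j hj ↦ by
    rw [esymm_roots hFm hFd hj.2.le, esymm_roots hGm hGd hj.2.le, hcoef j hj.1 hj.2]
  rw [integral_pow_eq_psum_roots hk1 hkd hFm hFd μf hμf,
    integral_pow_eq_psum_roots hk1 hkd hGm hGd μg hμg, ← mul_sub,
    Multiset.psum_sub_psum_of_esymm_eq _ _ hk1 esymm_eq, esymm_roots hFm hFd le_rfl,
    esymm_roots hGm hGd le_rfl]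
  have sign : (-1 : ℂ) ^ (k + 1) * (-1) ^ k = -1 := by
    rw [← pow_add]; exact Odd.neg_one_pow ⟨k, by ring⟩
  linear_combination (k : ℂ) / d * (F.coeff (d - k) - G.coeff (d - k)) * sign

/-- difference of `k`-th moments of the equilibrium measures of two
monic polynomials agreeing in their first `k-1` coefficients. -/
theorem stmt13 (d k : ℕ) (hd : 2 ≤ d) (hk1 : 1 ≤ k) (hkd : k < d)
    (F G : Polynomial ℂ) (hFm : F.Monic) (hFd : F.natDegree = d)
    (hGm : G.Monic) (hGd : G.natDegree = d)
    (μf μg : Measure ℂ)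
    [IsProbabilityMeasure μf] [IsProbabilityMeasure μg]
    (hμf : ∀ φ : ℂ → ℂ, Continuous φ →
      ∫ z, φ z ∂μf = (d : ℂ)⁻¹ * ∫ c, ((F - C c).roots.map φ).sum ∂μf)
    (hμg : ∀ φ : ℂ → ℂ, Continuous φ →
      ∫ z, φ z ∂μg = (d : ℂ)⁻¹ * ∫ c, ((G - C c).roots.map φ).sum ∂μg)
    (hcoef : ∀ j, 1 ≤ j → j < k → F.coeff (d - j) = G.coeff (d - j)) :
    (∫ z, z ^ k ∂μf) - (∫ z, z ^ k ∂μg) =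
      -((k : ℂ) / (d : ℂ)) * (F.coeff (d - k) - G.coeff (d - k)) :=
  stmt13_general d k hk1 hkd F G hFm hFd hGm hGd μf μg hμf hμg hcoef
end
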